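/- arXiv:2007.13644 — 5 statements merged into one kernel-verified Lean document; each statement's English description precedes it below -/
import Mathlib

section
/- Let S be a convex compact subset of ℝ^M and f : ℝ^M → ℝ^M a map that is Lipschitz on S with constant L and satisfies the one-sided Lipschitz condition on S with constant λ < 0, i.e. ⟪f(y₁) − f(y₂), y₁ − y₂⟫ ≤ λ‖y₁ − y₂‖² for all y₁, y₂ ∈ S. Set C = sup_{y∈S} L·‖f(y)‖. Let y₀, z₀ ∈ S with ‖y₀ − z₀‖ ≤ ε, let y : [0,τ] → S solve y′(t) = f(y(t)) with y(0) = y₀, and let ỹ(t) = z₀ + t·f(z₀) be the explicit Euler approximation, assumed to remain in S for t ∈ [0,τ]. Then for all t ∈ [0,τ]: ‖y(t) − ỹ(t)‖ ≤ ( ε²·e^{λt} + (C²/λ²)·( t² + 2t/λ + (2/λ²)·(1 − e^{λt}) ) )^{1/2}. -/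
/-!
The squared error `E(s) = ‖y(s) - ỹ(s)‖²` has derivative `2⟪y - ỹ, f(y) - f(z₀)⟫`. Splitting
`f(y) - f(z₀) = (f(y) - f(ỹ)) + (f(ỹ) - f(z₀))`, the first part contributes at most `2λE` by the
one-sided Lipschitz condition, and the second, of norm at most `C s`, at most `-λE - C²s²/λ`
after absorbing the cross term by AM-GM. Hence `E' ≤ λE - C²s²/λ`, and `E` stays below the
solution of the corresponding linear ODE with initial value `ε²`, which is the stated bound.
-/

open Set Real
open scoped RealInnerProductSpace

/-- The solution of `u' = λ u - C² s² / λ`, `u 0 = ε²`. -/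
noncomputable def eulerErrorBound (lam C ε s : ℝ) : ℝ :=
  ε ^ 2 * exp (lam * s) +
    C ^ 2 / lam ^ 2 * (s ^ 2 + 2 * s / lam + 2 / lam ^ 2 * (1 - exp (lam * s)))

lemma eulerErrorBound_zero (lam C ε : ℝ) : eulerErrorBound lam C ε 0 = ε ^ 2 := by
  simp [eulerErrorBound]

lemma hasDerivAt_eulerErrorBound {lam : ℝ} (hlam : lam ≠ 0) (C ε s : ℝ) :
    HasDerivAt (eulerErrorBound lam C ε)
      (lam * eulerErrorBound lam C ε s - C ^ 2 * s ^ 2 / lam) s := by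
  have hexp : HasDerivAt (fun s => exp (lam * s)) (exp (lam * s) * lam) s := by
    simpa using ((hasDerivAt_id s).const_mul lam).exp
  have hsum := (hexp.const_mul (ε ^ 2)).add
    ((((hasDerivAt_pow 2 s).add (((hasDerivAt_id s).const_mul 2).div_const lam)).add
      (((hasDerivAt_const s 1).sub hexp).const_mul (2 / lam ^ 2))).const_mul (C ^ 2 / lam ^ 2))
  refine hsum.congr_deriv ?_
  simp only [eulerErrorBound]
  field_simp
  ring

lemma le_of_hasDerivAt_sub_mul_le {E u E' u' : ℝ → ℝ} {lam a b : ℝ}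
    (hE : ∀ s ∈ Icc a b, HasDerivAt E (E' s) s) (hu : ∀ s ∈ Icc a b, HasDerivAt u (u' s) s)
    (hle : ∀ s ∈ Icc a b, E' s - lam * E s ≤ u' s - lam * u s) (ha : E a ≤ u a) :
    ∀ t ∈ Icc a b, E t ≤ u t := by
  have hG : ∀ s ∈ Icc a b, HasDerivAt (fun s => exp (-lam * s) * (E s - u s))
      (exp (-lam * s) * ((E' s - lam * E s) - (u' s - lam * u s))) s := by
    intro s hs
    have hexp : HasDerivAt (fun s => exp (-lam * s)) (exp (-lam * s) * -lam) s := by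
      simpa using ((hasDerivAt_id s).const_mul (-lam)).exp
    refine (hexp.mul ((hE s hs).sub (hu s hs))).congr_deriv ?_
    simp only [Pi.sub_apply]
    ring
  have hanti : AntitoneOn (fun s => exp (-lam * s) * (E s - u s)) (Icc a b) := by
    refine antitoneOn_of_hasDerivWithinAt_nonpos (convex_Icc a b)
      (f' := fun s => exp (-lam * s) * ((E' s - lam * E s) - (u' s - lam * u s)))
      (fun s hs => (hG s hs).continuousAt.continuousWithinAt) (fun s hs => ?_) (fun s hs => ?_)
    all_goals rw [interior_Icc] at hs
    · exact (hG s (Ioo_subset_Icc_self hs)).hasDerivWithinAt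
    · exact mul_nonpos_of_nonneg_of_nonpos (exp_pos _).le
        (sub_nonpos.2 (hle s (Ioo_subset_Icc_self hs)))
  intro t ht
  have hGa : exp (-lam * a) * (E a - u a) ≤ 0 :=
    mul_nonpos_of_nonneg_of_nonpos (exp_pos _).le (sub_nonpos.2 ha)
  have hGt : exp (-lam * t) * (E t - u t) ≤ 0 :=
    (hanti (left_mem_Icc.2 (ht.1.trans ht.2)) ht ht.1).trans hGa
  exact sub_nonpos.1 (nonpos_of_mul_nonpos_right hGt (exp_pos _))

section InnerProduct

variable {F : Type*} [NormedAddCommGroup F] [InnerProductSpace ℝ F]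

lemma two_inner_add_le_of_inner_le {a b w : F} {lam K : ℝ} (hlam : lam < 0)
    (ha : ⟪a, w⟫ ≤ lam * ‖w‖ ^ 2) (hb : ‖b‖ ≤ K) :
    2 * ⟪w, a + b⟫ ≤ lam * ‖w‖ ^ 2 - K ^ 2 / lam := by
  have hwb : ⟪w, b⟫ ≤ ‖w‖ * K :=
    (real_inner_le_norm w b).trans (mul_le_mul_of_nonneg_left hb (norm_nonneg w))
  have hK : K ^ 2 / lam * lam = K ^ 2 := div_mul_cancel₀ _ hlam.ne
  rw [inner_add_right, real_inner_comm]
  nlinarith [sq_nonneg (lam * ‖w‖ + K)]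

lemma norm_apply_add_smul_sub_le {f : F → F} {S : Set F} {L C s : ℝ} {z : F}
    (hLip : ∀ y₁ ∈ S, ∀ y₂ ∈ S, ‖f y₁ - f y₂‖ ≤ L * ‖y₁ - y₂‖) (hz : z ∈ S)
    (hzs : z + s • f z ∈ S) (hs : 0 ≤ s) (hC : L * ‖f z‖ ≤ C) :
    ‖f (z + s • f z) - f z‖ ≤ C * s :=
  calc ‖f (z + s • f z) - f z‖ ≤ L * ‖z + s • f z - z‖ := hLip _ hzs _ hz
    _ = s * (L * ‖f z‖) := by rw [add_sub_cancel_left, norm_smul, norm_of_nonneg hs]; ring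
    _ ≤ C * s := by rw [mul_comm C]; exact mul_le_mul_of_nonneg_left hC hs

end InnerProduct

theorem euler_error_bound_neg_osl_general {M : ℕ}
    (S : Set (EuclideanSpace ℝ (Fin M)))
    (f : EuclideanSpace ℝ (Fin M) → EuclideanSpace ℝ (Fin M))
    (L lam C ε τ : ℝ) (hlam : lam < 0)
    (hLip : ∀ y₁ ∈ S, ∀ y₂ ∈ S, ‖f y₁ - f y₂‖ ≤ L * ‖y₁ - y₂‖)
    (hOSL : ∀ y₁ ∈ S, ∀ y₂ ∈ S,
      ⟪f y₁ - f y₂, y₁ - y₂⟫ ≤ lam * ‖y₁ - y₂‖ ^ 2)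
    (hC : IsLUB ((fun y => L * ‖f y‖) '' S) C)
    (y₀ z₀ : EuclideanSpace ℝ (Fin M)) (hz₀S : z₀ ∈ S)
    (hyz : ‖y₀ - z₀‖ ≤ ε)
    (y : ℝ → EuclideanSpace ℝ (Fin M))
    (hy0 : y 0 = y₀)
    (hyS : ∀ t ∈ Icc (0 : ℝ) τ, y t ∈ S)
    (hy' : ∀ t ∈ Icc (0 : ℝ) τ, HasDerivAt y (f (y t)) t)
    (hEulerS : ∀ t ∈ Icc (0 : ℝ) τ, z₀ + t • f z₀ ∈ S) :
    ∀ t ∈ Icc (0 : ℝ) τ,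
      ‖y t - (z₀ + t • f z₀)‖ ≤
        Real.sqrt (ε ^ 2 * Real.exp (lam * t) +
          C ^ 2 / lam ^ 2 *
            (t ^ 2 + 2 * t / lam + 2 / lam ^ 2 * (1 - Real.exp (lam * t)))) := by
  set e := fun s => y s - (z₀ + s • f z₀)
  have he : ∀ s ∈ Icc (0 : ℝ) τ, HasDerivAt e (f (y s) - f z₀) s := fun s hs => by
    have := (hy' s hs).sub (((hasDerivAt_id s).smul_const (f z₀)).const_add z₀)
    rwa [one_smul] at this
  have hkey : ∀ s ∈ Icc (0 : ℝ) τ, 2 * ⟪e s, f (y s) - f z₀⟫ - lam * ‖e s‖ ^ 2 ≤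
      (lam * eulerErrorBound lam C ε s - C ^ 2 * s ^ 2 / lam) -
        lam * eulerErrorBound lam C ε s := by
    intro s hs
    have hdefect :=
      norm_apply_add_smul_sub_le hLip hz₀S (hEulerS s hs) hs.1 (hC.1 ⟨z₀, hz₀S, rfl⟩)
    have hinner := two_inner_add_le_of_inner_le hlam (hOSL _ (hyS s hs) _ (hEulerS s hs)) hdefect
    rw [sub_add_sub_cancel, mul_pow] at hinner
    linarith
  have h0 : ‖e 0‖ ^ 2 ≤ eulerErrorBound lam C ε 0 := by
    simpa [e, hy0, eulerErrorBound_zero] using pow_le_pow_left₀ (norm_nonneg _) hyz 2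
  intro t ht
  rw [← sqrt_sq (norm_nonneg (e t))]
  exact sqrt_le_sqrt (le_of_hasDerivAt_sub_mul_le (fun s hs => (he s hs).norm_sq)
    (fun s _ => hasDerivAt_eulerErrorBound hlam.ne C ε s) hkey h0 t ht)

/-- Euler error bound for a one-sided Lipschitz vector field with negative
OSL constant `lam < 0` (Proposition 1, case `λ < 0`). -/
theorem euler_error_bound_neg_osl {M : ℕ}
    (S : Set (EuclideanSpace ℝ (Fin M)))
    (hSconv : Convex ℝ S) (hScomp : IsCompact S)
    (f : EuclideanSpace ℝ (Fin M) → EuclideanSpace ℝ (Fin M))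
    (L lam C ε τ : ℝ) (hlam : lam < 0)
    (hLip : ∀ y₁ ∈ S, ∀ y₂ ∈ S, ‖f y₁ - f y₂‖ ≤ L * ‖y₁ - y₂‖)
    (hOSL : ∀ y₁ ∈ S, ∀ y₂ ∈ S,
      ⟪f y₁ - f y₂, y₁ - y₂⟫ ≤ lam * ‖y₁ - y₂‖ ^ 2)
    (hC : IsLUB ((fun y => L * ‖f y‖) '' S) C)
    (y₀ z₀ : EuclideanSpace ℝ (Fin M)) (hy₀S : y₀ ∈ S) (hz₀S : z₀ ∈ S)
    (hyz : ‖y₀ - z₀‖ ≤ ε)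
    (y : ℝ → EuclideanSpace ℝ (Fin M))
    (hy0 : y 0 = y₀)
    (hyS : ∀ t ∈ Icc (0 : ℝ) τ, y t ∈ S)
    (hy' : ∀ t ∈ Icc (0 : ℝ) τ, HasDerivAt y (f (y t)) t)
    (hEulerS : ∀ t ∈ Icc (0 : ℝ) τ, z₀ + t • f z₀ ∈ S) :
    ∀ t ∈ Icc (0 : ℝ) τ,
      ‖y t - (z₀ + t • f z₀)‖ ≤
        Real.sqrt (ε ^ 2 * Real.exp (lam * t) +
          C ^ 2 / lam ^ 2 *
            (t ^ 2 + 2 * t / lam + 2 / lam ^ 2 * (1 - Real.exp (lam * t)))) :=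
  euler_error_bound_neg_osl_general S f L lam C ε τ hlam hLip hOSL hC y₀ z₀ hz₀S hyz y hy0 hyS hy'
    hEulerS
end

section
/- Let S be a convex compact subset of ℝ^M and f : ℝ^M → ℝ^M a map that is Lipschitz on S with constant L and satisfies the one-sided Lipschitz condition on S with constant λ > 0, i.e. ⟪f(y₁) − f(y₂), y₁ − y₂⟫ ≤ λ‖y₁ − y₂‖² for all y₁, y₂ ∈ S. Set C = sup_{y∈S} L·‖f(y)‖. Let y₀, z₀ ∈ S with ‖y₀ − z₀‖ ≤ ε, let y : [0,τ] → S solve y′(t) = f(y(t)) with y(0) = y₀, and let ỹ(t) = z₀ + t·f(z₀) be the explicit Euler approximation, assumed to remain in S for t ∈ [0,τ]. Then for all t ∈ [0,τ]: ‖y(t) − ỹ(t)‖ ≤ ( ε²·e^{3λt} + (C²/(3λ²))·( −t² − 2t/(3λ) + (2/(9λ²))·(e^{3λt} − 1) ) )^{1/2}. -/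
/-!
The squared error `E t = ‖y t - ỹ t‖²` has derivative `2⟪f (y t) - f z₀, y t - ỹ t⟫`.
Splitting `f (y t) - f z₀` through `f (ỹ t)`, the one-sided Lipschitz condition bounds the
first part by `λ E t`, while `‖f (ỹ t) - f z₀‖ ≤ L ‖t • f z₀‖ ≤ C t` and AM-GM bound the
second by `λ E t + (C t)² / (2λ)`, so `E' ≤ 3λ E + (C t)² / λ`.
The square of the claimed bound solves `v' = 3λ v + (C t)² / λ` with `v 0 = ε²`,
and a comparison argument gives `E ≤ v`.
-/

open Set Real
open scoped RealInnerProductSpace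

theorem le_of_hasDerivAt_le_linear {E E' v k : ℝ → ℝ} {a b c : ℝ}
    (hE : ∀ t ∈ Icc a b, HasDerivAt E (E' t) t)
    (hv : ∀ t ∈ Icc a b, HasDerivAt v (c * v t + k t) t)
    (hE' : ∀ t ∈ Icc a b, E' t ≤ c * E t + k t) (ha : E a ≤ v a) :
    ∀ t ∈ Icc a b, E t ≤ v t := by
  have hweight : ∀ {u : ℝ → ℝ} {d t : ℝ}, HasDerivAt u d t →
      HasDerivAt (fun s => exp (-c * s) * u s) (exp (-c * t) * (d - c * u t)) t := by
    intro u d t hu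
    have hexp : HasDerivAt (fun s => exp (-c * s)) (exp (-c * t) * -c) t := by
      simpa using ((hasDerivAt_id t).const_mul (-c)).exp
    exact (hexp.mul hu).congr_deriv (by ring)
  have hcont : ∀ {u u' : ℝ → ℝ}, (∀ t ∈ Icc a b, HasDerivAt u (u' t) t) →
      ContinuousOn (fun s => exp (-c * s) * u s) (Icc a b) := fun hu t ht =>
    (hweight (hu t ht)).continuousAt.continuousWithinAt
  -- multiplying by the integrating factor `exp (-c t)` turns the claim into a plain derivative bound
  have hweighted := image_le_of_deriv_right_le_deriv_boundary
    (f' := fun t => exp (-c * t) * (E' t - c * E t))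
    (B := fun s => exp (-c * s) * v s) (B' := fun t => exp (-c * t) * (c * v t + k t - c * v t))
    (hcont hE)
    (fun t ht => (hweight (hE t (Ico_subset_Icc_self ht))).hasDerivWithinAt)
    (mul_le_mul_of_nonneg_left ha (exp_pos _).le) (hcont hv)
    (fun t ht => (hweight (hv t (Ico_subset_Icc_self ht))).hasDerivWithinAt)
    (fun t ht => mul_le_mul_of_nonneg_left
      (by linarith [hE' t (Ico_subset_Icc_self ht)]) (exp_pos _).le)
  exact fun t ht => le_of_mul_le_mul_left (hweighted ht) (exp_pos _)

theorem two_inner_sub_le_of_inner_sub_le {F : Type*} [NormedAddCommGroup F] [InnerProductSpace ℝ F]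
    {a b c w : F} {lam r : ℝ} (hlam : 0 < lam) (hosl : ⟪a - b, w⟫ ≤ lam * ‖w‖ ^ 2)
    (hbc : ‖b - c‖ ≤ r) : 2 * ⟪a - c, w⟫ ≤ 3 * lam * ‖w‖ ^ 2 + r ^ 2 / lam := by
  have hsplit : ⟪a - c, w⟫ = ⟪a - b, w⟫ + ⟪b - c, w⟫ := by
    rw [← inner_add_left, sub_add_sub_cancel]
  have hpert : ⟪b - c, w⟫ ≤ r * ‖w‖ :=
    (real_inner_le_norm _ _).trans (mul_le_mul_of_nonneg_right hbc (norm_nonneg _))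
  have hamgm : 2 * (r * ‖w‖) ≤ lam * ‖w‖ ^ 2 + r ^ 2 / lam := by
    have : lam * ‖w‖ ^ 2 + r ^ 2 / lam - 2 * (r * ‖w‖) = (lam * ‖w‖ - r) ^ 2 / lam := by
      field_simp
      ring
    nlinarith [div_nonneg (sq_nonneg (lam * ‖w‖ - r)) hlam.le]
  linarith

noncomputable def eulerErrorBoundSq (ε C lam t : ℝ) : ℝ :=
  ε ^ 2 * exp (3 * lam * t) +
    C ^ 2 / (3 * lam ^ 2) * (-t ^ 2 - 2 * t / (3 * lam) + 2 / (9 * lam ^ 2) * (exp (3 * lam * t) - 1))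

theorem eulerErrorBoundSq_zero (ε C lam : ℝ) : eulerErrorBoundSq ε C lam 0 = ε ^ 2 := by
  simp [eulerErrorBoundSq]

theorem hasDerivAt_eulerErrorBoundSq (ε C : ℝ) {lam : ℝ} (hlam : lam ≠ 0) (t : ℝ) :
    HasDerivAt (eulerErrorBoundSq ε C lam)
      (3 * lam * eulerErrorBoundSq ε C lam t + (C * t) ^ 2 / lam) t := by
  have hexp : HasDerivAt (fun s => exp (3 * lam * s)) (exp (3 * lam * t) * (3 * lam)) t := by
    simpa using ((hasDerivAt_id t).const_mul (3 * lam)).exp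
  have hpoly : HasDerivAt (fun s : ℝ => -s ^ 2 - 2 * s / (3 * lam)) (-(2 * t) - 2 / (3 * lam)) t :=
    (((hasDerivAt_pow 2 t).neg).sub
      (((hasDerivAt_id t).const_mul 2).div_const (3 * lam))).congr_deriv (by simp)
  refine ((hexp.const_mul (ε ^ 2)).add ((hpoly.add ((hexp.sub_const 1).const_mul
    (2 / (9 * lam ^ 2)))).const_mul (C ^ 2 / (3 * lam ^ 2)))).congr_deriv ?_
  unfold eulerErrorBoundSq
  field_simp
  ring

theorem euler_error_bound_pos_osl_general {M : ℕ}
    (S : Set (EuclideanSpace ℝ (Fin M)))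
    (f : EuclideanSpace ℝ (Fin M) → EuclideanSpace ℝ (Fin M))
    (L lam C ε τ : ℝ) (hlam : 0 < lam)
    (hLip : ∀ y₁ ∈ S, ∀ y₂ ∈ S, ‖f y₁ - f y₂‖ ≤ L * ‖y₁ - y₂‖)
    (hOSL : ∀ y₁ ∈ S, ∀ y₂ ∈ S,
      ⟪f y₁ - f y₂, y₁ - y₂⟫ ≤ lam * ‖y₁ - y₂‖ ^ 2)
    (hC : IsLUB ((fun y => L * ‖f y‖) '' S) C)
    (y₀ z₀ : EuclideanSpace ℝ (Fin M)) (hz₀S : z₀ ∈ S)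
    (hyz : ‖y₀ - z₀‖ ≤ ε)
    (y : ℝ → EuclideanSpace ℝ (Fin M))
    (hy0 : y 0 = y₀)
    (hyS : ∀ t ∈ Icc (0 : ℝ) τ, y t ∈ S)
    (hy' : ∀ t ∈ Icc (0 : ℝ) τ, HasDerivAt y (f (y t)) t)
    (hEulerS : ∀ t ∈ Icc (0 : ℝ) τ, z₀ + t • f z₀ ∈ S) :
    ∀ t ∈ Icc (0 : ℝ) τ,
      ‖y t - (z₀ + t • f z₀)‖ ≤
        Real.sqrt (ε ^ 2 * Real.exp (3 * lam * t) +
          C ^ 2 / (3 * lam ^ 2) *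
            (-t ^ 2 - 2 * t / (3 * lam) +
              2 / (9 * lam ^ 2) * (Real.exp (3 * lam * t) - 1))) := by
  set z : ℝ → EuclideanSpace ℝ (Fin M) := fun t => z₀ + t • f z₀
  have hz' : ∀ t, HasDerivAt z (f z₀) t := fun t =>
    (((hasDerivAt_id t).smul_const (f z₀)).const_add z₀).congr_deriv (one_smul _ _)
  have hdrift : ∀ t ∈ Icc (0 : ℝ) τ, ‖f (z t) - f z₀‖ ≤ C * t := fun t ht =>
    calc ‖f (z t) - f z₀‖ ≤ L * ‖z t - z₀‖ := hLip _ (hEulerS t ht) _ hz₀S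
      _ = t * (L * ‖f z₀‖) := by simp [z, norm_smul, abs_of_nonneg ht.1]; ring
      _ ≤ C * t := by rw [mul_comm C]; exact mul_le_mul_of_nonneg_left (hC.1 ⟨z₀, hz₀S, rfl⟩) ht.1
  have hsq : ‖y 0 - z 0‖ ^ 2 ≤ eulerErrorBoundSq ε C lam 0 := by
    simpa [z, hy0, eulerErrorBoundSq_zero] using pow_le_pow_left₀ (norm_nonneg _) hyz 2
  have hcomp := le_of_hasDerivAt_le_linear (E := fun t => ‖y t - z t‖ ^ 2)
    (fun t ht => ((hy' t ht).sub (hz' t)).norm_sq)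
    (fun t _ => hasDerivAt_eulerErrorBoundSq ε C hlam.ne' t)
    (fun t ht => by
      rw [real_inner_comm]
      exact two_inner_sub_le_of_inner_sub_le hlam (hOSL _ (hyS t ht) _ (hEulerS t ht)) (hdrift t ht))
    hsq
  exact fun t ht => le_sqrt_of_sq_le (hcomp t ht)

/-- Euler error bound for a one-sided Lipschitz vector field with positive
OSL constant `lam > 0` (Proposition 1, case `λ > 0`). -/
theorem euler_error_bound_pos_osl {M : ℕ}
    (S : Set (EuclideanSpace ℝ (Fin M)))
    (hSconv : Convex ℝ S) (hScomp : IsCompact S)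
    (f : EuclideanSpace ℝ (Fin M) → EuclideanSpace ℝ (Fin M))
    (L lam C ε τ : ℝ) (hlam : 0 < lam)
    (hLip : ∀ y₁ ∈ S, ∀ y₂ ∈ S, ‖f y₁ - f y₂‖ ≤ L * ‖y₁ - y₂‖)
    (hOSL : ∀ y₁ ∈ S, ∀ y₂ ∈ S,
      ⟪f y₁ - f y₂, y₁ - y₂⟫ ≤ lam * ‖y₁ - y₂‖ ^ 2)
    (hC : IsLUB ((fun y => L * ‖f y‖) '' S) C)
    (y₀ z₀ : EuclideanSpace ℝ (Fin M)) (hy₀S : y₀ ∈ S) (hz₀S : z₀ ∈ S)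
    (hyz : ‖y₀ - z₀‖ ≤ ε)
    (y : ℝ → EuclideanSpace ℝ (Fin M))
    (hy0 : y 0 = y₀)
    (hyS : ∀ t ∈ Icc (0 : ℝ) τ, y t ∈ S)
    (hy' : ∀ t ∈ Icc (0 : ℝ) τ, HasDerivAt y (f (y t)) t)
    (hEulerS : ∀ t ∈ Icc (0 : ℝ) τ, z₀ + t • f z₀ ∈ S) :
    ∀ t ∈ Icc (0 : ℝ) τ,
      ‖y t - (z₀ + t • f z₀)‖ ≤
        Real.sqrt (ε ^ 2 * Real.exp (3 * lam * t) +
          C ^ 2 / (3 * lam ^ 2) *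
            (-t ^ 2 - 2 * t / (3 * lam) +
              2 / (9 * lam ^ 2) * (Real.exp (3 * lam * t) - 1))) :=
  euler_error_bound_pos_osl_general S f L lam C ε τ hlam hLip hOSL hC y₀ z₀ hz₀S hyz y hy0 hyS hy'
    hEulerS
end

section
/- Let λ < 0, C > 0 and e₀ > 0 be real numbers. Define G = √3·e₀·|λ|/C and α = 1 + |λ|·G/4 − √(1 + (λ·G/4)²), and suppose |λ|·G/4 < 1. Define δ(t) = ( e₀²·e^{λt} + (C²/λ²)·( t² + 2t/λ + (2/λ²)·(1 − e^{λt}) ) )^{1/2}. Then for every τ ≤ G·(1 − α) and every t ∈ [0, τ]: δ(t) ≤ e₀. -/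
/-!
Write `v = λt ≤ 0`. Then `δ(t)² = e₀² e^v + (C²/λ⁴)(v² + 2v + 2 − 2e^v)`, and the Taylor bounds
`1 + v + v²/2 + v³/6 ≤ e^v ≤ 1 + v + v²/2` (valid for `v ≤ 0`) give
`v² + 2v + 2 − 2e^v ≤ −v³/3` and `1 − e^v ≥ −v − v²/2`. So `δ(t) ≤ e₀` as soon as
`C² t² ≤ 3 e₀² λ² (1 + λt/2)`, i.e. `t² + |λ| G² t / 2 ≤ G²` since `C² G² = 3 e₀² λ²`;
and `G(1 − α)` is exactly the positive root of this quadratic in `t`.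
-/

open Set Real

lemma le_of_hasDerivAt_of_deriv_le_of_nonpos {f g f' g' : ℝ → ℝ}
    (hf : ∀ x, HasDerivAt f (f' x) x) (hg : ∀ x, HasDerivAt g (g' x) x)
    (hderiv : ∀ x ≤ 0, g' x ≤ f' x) (h₀ : f 0 ≤ g 0) {v : ℝ} (hv : v ≤ 0) : f v ≤ g v := by
  have hanti : AntitoneOn (g - f) (Iic 0) := by
    refine antitoneOn_of_hasDerivWithinAt_nonpos (convex_Iic 0)
      (fun x _ => ((hg x).sub (hf x)).continuousAt.continuousWithinAt)
      (fun x _ => ((hg x).sub (hf x)).hasDerivWithinAt) fun x hx => ?_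
    rw [interior_Iic] at hx
    exact sub_nonpos.mpr (hderiv x (le_of_lt hx))
  have := hanti (mem_Iic.mpr hv) (mem_Iic.mpr le_rfl) hv
  simp only [Pi.sub_apply] at this
  linarith

namespace Real

lemma exp_le_quadratic_of_nonpos {v : ℝ} (hv : v ≤ 0) : exp v ≤ 1 + v + v ^ 2 / 2 := by
  refine le_of_hasDerivAt_of_deriv_le_of_nonpos (g := fun x => 1 + x + x ^ 2 / 2)
    (f' := exp) (g' := fun x => 1 + x) hasDerivAt_exp (fun x => ?_) (fun x _ => by linarith [add_one_le_exp x]) (by simp) hv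
  exact (((hasDerivAt_id x).const_add 1).add ((hasDerivAt_pow 2 x).div_const 2)).congr_deriv
    (by simp)

lemma cubic_le_exp_of_nonpos {v : ℝ} (hv : v ≤ 0) :
    1 + v + v ^ 2 / 2 + v ^ 3 / 6 ≤ exp v := by
  refine le_of_hasDerivAt_of_deriv_le_of_nonpos (f := fun x => 1 + x + x ^ 2 / 2 + x ^ 3 / 6)
    (f' := fun x => 1 + x + x ^ 2 / 2) (g' := exp)
    (fun x => ?_) hasDerivAt_exp (fun x hx => exp_le_quadratic_of_nonpos hx) (by simp) hv
  exact ((((hasDerivAt_id x).const_add 1).add ((hasDerivAt_pow 2 x).div_const 2)).add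
    ((hasDerivAt_pow 3 x).div_const 6)).congr_deriv (by simp; ring)

end Real

lemma mul_exp_add_mul_remainder_le {A K v : ℝ} (hA : 0 ≤ A) (hK : 0 ≤ K) (hv : v ≤ 0)
    (h : K * v ^ 2 ≤ 3 * A * (1 + v / 2)) :
    A * exp v + K * (v ^ 2 + 2 * v + 2 - 2 * exp v) ≤ A := by
  have hcubic := cubic_le_exp_of_nonpos hv
  have hquad := exp_le_quadratic_of_nonpos hv
  have hremainder : K * (v ^ 2 + 2 * v + 2 - 2 * exp v) ≤ A * (1 - exp v) :=
    calc K * (v ^ 2 + 2 * v + 2 - 2 * exp v)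
        ≤ K * (-v ^ 3 / 3) := mul_le_mul_of_nonneg_left (by linarith) hK
      _ = -v / 3 * (K * v ^ 2) := by ring
      _ ≤ -v / 3 * (3 * A * (1 + v / 2)) := mul_le_mul_of_nonneg_left h (by linarith)
      _ = A * (-v - v ^ 2 / 2) := by ring
      _ ≤ A * (1 - exp v) := mul_le_mul_of_nonneg_left (by linarith) hA
  linarith

lemma euler_error_sq_le {lam C e₀ t : ℝ} (hlam : lam < 0) (ht : 0 ≤ t)
    (h : C ^ 2 * t ^ 2 ≤ 3 * e₀ ^ 2 * lam ^ 2 * (1 + lam * t / 2)) :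
    e₀ ^ 2 * exp (lam * t) +
      C ^ 2 / lam ^ 2 * (t ^ 2 + 2 * t / lam + 2 / lam ^ 2 * (1 - exp (lam * t))) ≤ e₀ ^ 2 := by
  have hlam₀ : lam ≠ 0 := hlam.ne
  have hrescale : C ^ 2 / lam ^ 2 * (t ^ 2 + 2 * t / lam + 2 / lam ^ 2 * (1 - exp (lam * t))) =
      C ^ 2 / lam ^ 4 * ((lam * t) ^ 2 + 2 * (lam * t) + 2 - 2 * exp (lam * t)) := by
    field_simp
    ring
  rw [hrescale]
  refine mul_exp_add_mul_remainder_le (sq_nonneg e₀) (by positivity)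
    (mul_nonpos_of_nonpos_of_nonneg hlam.le ht) ?_
  calc C ^ 2 / lam ^ 4 * (lam * t) ^ 2 = C ^ 2 * t ^ 2 / lam ^ 2 := by field_simp
    _ ≤ 3 * e₀ ^ 2 * lam ^ 2 * (1 + lam * t / 2) / lam ^ 2 := by gcongr
    _ = 3 * e₀ ^ 2 * (1 + lam * t / 2) := by field_simp

lemma sq_le_sq_mul_one_sub_of_le_root {μ G t : ℝ} (hμ : 0 ≤ μ) (hG : 0 ≤ G) (ht₀ : 0 ≤ t)
    (ht : t ≤ G * (√(1 + (μ * G / 4) ^ 2) - μ * G / 4)) :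
    t ^ 2 ≤ G ^ 2 * (1 - μ * t / 2) := by
  have hs := sq_sqrt (by positivity : 0 ≤ 1 + (μ * G / 4) ^ 2)
  have hshift : 0 ≤ t + G * (μ * G / 4) := by positivity
  have hsq : (t + G * (μ * G / 4)) ^ 2 ≤ (G * √(1 + (μ * G / 4) ^ 2)) ^ 2 :=
    pow_le_pow_left₀ hshift (by linarith) 2
  nlinarith

theorem euler_error_contracting_general (lam C e₀ : ℝ) (hlam : lam < 0) (hC : 0 < C)
    (he₀ : 0 < e₀) (G α : ℝ)
    (hG : G = Real.sqrt 3 * e₀ * |lam| / C)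
    (hα : α = 1 + |lam| * G / 4 - Real.sqrt (1 + (lam * G / 4) ^ 2)) :
    ∀ τ : ℝ, τ ≤ G * (1 - α) → ∀ t ∈ Icc (0 : ℝ) τ,
      Real.sqrt (e₀ ^ 2 * Real.exp (lam * t) +
        C ^ 2 / lam ^ 2 *
          (t ^ 2 + 2 * t / lam + 2 / lam ^ 2 * (1 - Real.exp (lam * t)))) ≤ e₀ := by
  rintro τ hτ t ⟨ht₀, htτ⟩
  have hCG : C ^ 2 * G ^ 2 = 3 * e₀ ^ 2 * lam ^ 2 := by
    rw [hG, div_pow, mul_div_cancel₀ _ (by positivity), mul_pow, mul_pow, sq_abs,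
      sq_sqrt (by norm_num)]
  have hroot : G * (1 - α) = G * (√(1 + (|lam| * G / 4) ^ 2) - |lam| * G / 4) := by
    rw [hα, mul_div_assoc, mul_div_assoc, mul_pow, mul_pow, sq_abs]
    ring
  have hquad := sq_le_sq_mul_one_sub_of_le_root (abs_nonneg lam) (by rw [hG]; positivity) ht₀
    (htτ.trans (hτ.trans hroot.le))
  rw [abs_of_neg hlam] at hquad
  rw [sqrt_le_left he₀.le]
  refine euler_error_sq_le hlam ht₀ ?_
  calc C ^ 2 * t ^ 2 ≤ C ^ 2 * (G ^ 2 * (1 - -lam * t / 2)) := by gcongr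
    _ = 3 * e₀ ^ 2 * lam ^ 2 * (1 + lam * t / 2) := by rw [← hCG]; ring

/-- Lemma 1: for `λ < 0`, `C > 0`, `e₀ > 0`, with `G = √3·e₀·|λ|/C`,
`α = 1 + |λ|G/4 − √(1 + (λG/4)²)` and `|λ|G/4 < 1`, the Euler error bound
`δ(t) = (e₀²·e^{λt} + (C²/λ²)(t² + 2t/λ + (2/λ²)(1 − e^{λt})))^{1/2}` stays
below `e₀` on `[0, τ]` whenever `τ ≤ G·(1 − α)`. -/
theorem euler_error_contracting (lam C e₀ : ℝ) (hlam : lam < 0) (hC : 0 < C)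
    (he₀ : 0 < e₀) (G α : ℝ)
    (hG : G = Real.sqrt 3 * e₀ * |lam| / C)
    (hα : α = 1 + |lam| * G / 4 - Real.sqrt (1 + (lam * G / 4) ^ 2))
    (hsmall : |lam| * G / 4 < 1) :
    ∀ τ : ℝ, τ ≤ G * (1 - α) → ∀ t ∈ Icc (0 : ℝ) τ,
      Real.sqrt (e₀ ^ 2 * Real.exp (lam * t) +
        C ^ 2 / lam ^ 2 *
          (t ^ 2 + 2 * t / lam + 2 / lam ^ 2 * (1 - Real.exp (lam * t)))) ≤ e₀ :=
  euler_error_contracting_general lam C e₀ hlam hC he₀ G α hG hα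
end

section
/- Let S be a convex compact subset of ℝ^M, U a finite set of modes, and for each u ∈ U let f_u : ℝ^M → ℝ^M be Lipschitz on S with constant L_u and satisfy the one-sided Lipschitz condition on S with constant λ_u < 0. Set C_u = sup_{y∈S} L_u·‖f_u(y)‖, and for ε > 0 set G_u = √3·ε·|λ_u|/C_u and α_u = 1 + |λ_u|·G_u/4 − √(1 + (λ_u·G_u/4)²). Assume hypothesis (H): for all u ∈ U, λ_u < 0, |λ_u|·G_u/4 < 1 and τ ≤ G_u·(1 − α_u). Let π = u₁⋯u_k ∈ U^k be a pattern, let y : [0, kτ] → S be the piecewise solution satisfying y′(t) = f_{u_n}(y(t)) for t ∈ [(n−1)τ, nτ] (n = 1,…,k), and let ỹ : [0, kτ] → S be the piecewise-linear Euler trajectory defined by z₀ given, ỹ(t) = z_{n−1} + (t − (n−1)τ)·f_{u_n}(z_{n−1}) for t ∈ [(n−1)τ, nτ] and z_n = z_{n−1} + τ·f_{u_n}(z_{n−1}), assumed to remain in S. If ‖y(0) − z₀‖ ≤ ε, then ‖y(t) − ỹ(t)‖ ≤ ε for all t ∈ [0, kτ]. -/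
open Set Real
open scoped RealInnerProductSpace

/-!
On a step of length `τ` started at time `a` from `z`, write `μ = |λ|` and `s = t - a`. The error
`e = y - ỹ` has `e' = f(y) - f(z)`; splitting `f(y) - f(z) = (f(y) - f(ỹ)) + (f(ỹ) - f(z))`, the
one-sided Lipschitz condition bounds the first part by `-μ‖e‖²` and the Lipschitz bound the second
by `C s ‖e‖`, so Young's inequality gives `(‖e‖²)' ≤ -μ‖e‖² + C² s² / μ`. The cubic
`ε² q(s)`, `q(s) = 1 - μ s + μ² s² / 2 + μ κ s³` with `κ = G⁻²`, is a supersolution of this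
inequality with `q(0) = 1`, and `q ≤ 1` as long as `μ s / 2 + κ s² ≤ 1`, which is exactly what
`τ ≤ G (1 - α)` guarantees. Grönwall's inequality for `‖e‖² - ε² q` keeps `‖e‖ ≤ ε` over the step,
in particular at its end, and induction along the pattern covers `[0, kτ]`.
-/

theorem nonpos_of_hasDerivAt_le_mul_self {F F' : ℝ → ℝ} {K a b : ℝ}
    (hF : ∀ x ∈ Icc a b, HasDerivAt F (F' x) x) (ha : F a ≤ 0)
    (bound : ∀ x ∈ Icc a b, F' x ≤ K * F x) : ∀ x ∈ Icc a b, F x ≤ 0 := by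
  intro x hx
  simpa [gronwallBound_ε0_δ0] using
    le_gronwallBound_of_liminf_deriv_right_le (δ := 0) (ε := 0)
    (fun x hx => (hF x hx).continuousAt.continuousWithinAt)
    (fun x hx _ hr => (hF x (Ico_subset_Icc_self hx)).hasDerivWithinAt.liminf_right_slope_le hr)
    ha (fun x hx => by simpa using bound x (Ico_subset_Icc_self hx)) x hx

noncomputable def eulerBarrier (μ κ s : ℝ) : ℝ := 1 - μ * s + μ ^ 2 * s ^ 2 / 2 + μ * κ * s ^ 3

theorem hasDerivAt_eulerBarrier (μ κ s : ℝ) :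
    HasDerivAt (eulerBarrier μ κ) (-μ + μ ^ 2 * s + 3 * μ * κ * s ^ 2) s := by
  have h := ((((hasDerivAt_id s).const_mul μ).const_sub 1).fun_add
    (((hasDerivAt_pow 2 s).const_mul (μ ^ 2)).div_const 2)).fun_add
    ((hasDerivAt_pow 3 s).const_mul (μ * κ))
  exact h.congr_deriv (by norm_num; ring)

theorem eulerBarrier_le_one {μ κ s : ℝ} (hμ : 0 ≤ μ) (hs : 0 ≤ s)
    (h : μ * s / 2 + κ * s ^ 2 ≤ 1) : eulerBarrier μ κ s ≤ 1 := by
  have : eulerBarrier μ κ s - 1 = μ * s * (μ * s / 2 + κ * s ^ 2 - 1) := by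
    unfold eulerBarrier; ring
  nlinarith [mul_nonneg hμ hs]

theorem mul_sq_le_deriv_add_mul_eulerBarrier {μ κ s : ℝ} (hμ : 0 ≤ μ) (hκ : 0 ≤ κ)
    (hs : 0 ≤ s) :
    3 * μ * κ * s ^ 2 ≤ (-μ + μ ^ 2 * s + 3 * μ * κ * s ^ 2) + μ * eulerBarrier μ κ s := by
  have : 0 ≤ μ ^ 3 * s ^ 2 / 2 + μ ^ 2 * κ * s ^ 3 := by positivity
  unfold eulerBarrier; nlinarith

section EulerStep

variable {E : Type*} [NormedAddCommGroup E] [InnerProductSpace ℝ E]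

theorem two_inner_sub_euler_le {S : Set E} {g : E → E} {Lg μ C s : ℝ}
    (hLip : ∀ y₁ ∈ S, ∀ y₂ ∈ S, ‖g y₁ - g y₂‖ ≤ Lg * ‖y₁ - y₂‖)
    (hOSL : ∀ y₁ ∈ S, ∀ y₂ ∈ S, ⟪g y₁ - g y₂, y₁ - y₂⟫ ≤ -μ * ‖y₁ - y₂‖ ^ 2)
    (hμ : 0 < μ) (hs : 0 ≤ s) {p z : E} (hp : p ∈ S) (hz : z ∈ S) (hw : z + s • g z ∈ S)
    (hC : Lg * ‖g z‖ ≤ C) :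
    2 * ⟪g p - g z, p - (z + s • g z)⟫ ≤
      -μ * ‖p - (z + s • g z)‖ ^ 2 + C ^ 2 * s ^ 2 / μ := by
  set w := z + s • g z
  set δ := ‖p - w‖
  have hcontract : ⟪g p - g w, p - w⟫ ≤ -μ * δ ^ 2 := hOSL p hp w hw
  have hdrift : ⟪g w - g z, p - w⟫ ≤ C * s * δ := calc
    ⟪g w - g z, p - w⟫ ≤ ‖g w - g z‖ * δ := real_inner_le_norm _ _
    _ ≤ Lg * ‖w - z‖ * δ := by gcongr; exact hLip w hw z hz
    _ = Lg * ‖g z‖ * (s * δ) := by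
      rw [show w - z = s • g z by simp [w], norm_smul, Real.norm_of_nonneg hs]; ring
    _ ≤ C * (s * δ) := by gcongr
    _ = C * s * δ := by ring
  have hYoung : -μ * δ ^ 2 + 2 * (C * s * δ) ≤ C ^ 2 * s ^ 2 / μ := by
    rw [le_div_iff₀ hμ]; nlinarith [sq_nonneg (μ * δ - C * s)]
  rw [← sub_add_sub_cancel (g p) (g w) (g z), inner_add_left]
  linarith

theorem norm_sub_le_of_euler_step {S : Set E} {g : E → E} {Lg μ κ C ε a b : ℝ} {y ytil : ℝ → E}
    {z : E}
    (hLip : ∀ y₁ ∈ S, ∀ y₂ ∈ S, ‖g y₁ - g y₂‖ ≤ Lg * ‖y₁ - y₂‖)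
    (hOSL : ∀ y₁ ∈ S, ∀ y₂ ∈ S, ⟪g y₁ - g y₂, y₁ - y₂⟫ ≤ -μ * ‖y₁ - y₂‖ ^ 2)
    (hμ : 0 < μ) (hκ : 0 ≤ κ) (hC : ∀ w ∈ S, Lg * ‖g w‖ ≤ C)
    (hCκ : C ^ 2 ≤ 3 * ε ^ 2 * μ ^ 2 * κ)
    (hstep : μ * (b - a) / 2 + κ * (b - a) ^ 2 ≤ 1)
    (hyS : ∀ t ∈ Icc a b, y t ∈ S) (hy : ∀ t ∈ Icc a b, HasDerivAt y (g (y t)) t)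
    (hytilS : ∀ t ∈ Icc a b, ytil t ∈ S) (hytil : ∀ t ∈ Icc a b, ytil t = z + (t - a) • g z)
    (h0 : ‖y a - z‖ ≤ ε) :
    ∀ t ∈ Icc a b, ‖y t - ytil t‖ ≤ ε := by
  intro t ht
  have hs : 0 ≤ t - a := sub_nonneg.2 ht.1
  have ha : a ∈ Icc a b := left_mem_Icc.2 (ht.1.trans ht.2)
  have hzS : z ∈ S := by simpa [hytil a ha] using hytilS a ha
  set F : ℝ → ℝ := fun t =>
    ‖y t - (z + (t - a) • g z)‖ ^ 2 - ε ^ 2 * eulerBarrier μ κ (t - a)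
  have hF : ∀ t ∈ Icc a b, HasDerivAt F (2 * ⟪y t - (z + (t - a) • g z), g (y t) - g z⟫ -
      ε ^ 2 * (-μ + μ ^ 2 * (t - a) + 3 * μ * κ * (t - a) ^ 2)) t := by
    intro t ht
    have hlin : HasDerivAt (fun t => z + (t - a) • g z) (g z) t := by
      simpa using (((hasDerivAt_id t).sub_const a).smul_const (g z)).const_add z
    exact ((hy t ht).sub hlin).norm_sq.sub
      (((hasDerivAt_eulerBarrier μ κ (t - a)).comp_sub_const t a).const_mul _)
  have hbound : ∀ t ∈ Icc a b, 2 * ⟪y t - (z + (t - a) • g z), g (y t) - g z⟫ -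
      ε ^ 2 * (-μ + μ ^ 2 * (t - a) + 3 * μ * κ * (t - a) ^ 2) ≤ -μ * F t := by
    intro t ht
    have hs : 0 ≤ t - a := sub_nonneg.2 ht.1
    have hinner := two_inner_sub_euler_le hLip hOSL hμ hs (hyS t ht) hzS
      (by simpa [hytil t ht] using hytilS t ht) (hC z hzS)
    have hsuper := mul_sq_le_deriv_add_mul_eulerBarrier hμ.le hκ hs
    have hsource : C ^ 2 * (t - a) ^ 2 / μ ≤ ε ^ 2 * (3 * μ * κ * (t - a) ^ 2) := by
      rw [div_le_iff₀ hμ]; nlinarith [sq_nonneg (t - a)]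
    rw [real_inner_comm]
    simp only [F]
    nlinarith [sq_nonneg ε]
  have hFa : F a ≤ 0 := by
    simpa [F, eulerBarrier] using pow_le_pow_left₀ (norm_nonneg _) h0 2
  have hFt := nonpos_of_hasDerivAt_le_mul_self hF hFa hbound t ht
  have hq : eulerBarrier μ κ (t - a) ≤ 1 := by
    refine eulerBarrier_le_one hμ.le hs (le_trans ?_ hstep)
    have := sub_le_sub_right ht.2 a
    gcongr
  have hε : 0 ≤ ε := (norm_nonneg _).trans h0
  rw [hytil t ht]
  refine (pow_le_pow_iff_left₀ (norm_nonneg _) hε two_ne_zero).1 ?_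
  have := mul_le_mul_of_nonneg_left hq (sq_nonneg ε)
  simp only [F] at hFt
  linarith

end EulerStep

-- With `κ = G⁻²` and `x = |λ| G / 4`, `1 - α = √(1 + x²) - x` is the positive root of
-- `ρ² + 2 x ρ = 1`, and `ρ = τ / G` lies below it.
theorem euler_step_conditions {lam C G α ε τ : ℝ} (hτ : 0 < τ)
    (hG : G = √3 * ε * |lam| / C)
    (hα : α = 1 + |lam| * G / 4 - √(1 + (lam * G / 4) ^ 2)) (hτG : τ ≤ G * (1 - α)) :
    C ^ 2 ≤ 3 * ε ^ 2 * |lam| ^ 2 * (G ^ 2)⁻¹ ∧ |lam| * τ / 2 + (G ^ 2)⁻¹ * τ ^ 2 ≤ 1 := by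
  set x := |lam| * G / 4 with hx
  have hα' : 1 - α = √(1 + x ^ 2) - x := by
    have : (lam * G / 4) ^ 2 = x ^ 2 := by simp only [hx, div_pow, mul_pow, sq_abs]
    rw [hα, this]; ring
  have hx_lt : x < √(1 + x ^ 2) := Real.lt_sqrt_of_sq_lt (by linarith)
  have hGpos : 0 < G := by
    by_contra! hG0
    have : x ≤ 0 := by rw [hx]; have := abs_nonneg lam; nlinarith
    nlinarith [mul_nonneg_of_nonpos_of_nonpos hG0 (sub_nonpos.2 hx_lt.le)]
  have hCG : C * G = √3 * ε * |lam| := by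
    have hC : C ≠ 0 := by rintro rfl; simp [hG] at hGpos
    rw [hG]; field_simp
  refine ⟨?_, ?_⟩
  · rw [le_mul_inv_iff₀ (by positivity)]
    apply le_of_eq
    calc C ^ 2 * G ^ 2 = (C * G) ^ 2 := by ring
      _ = 3 * ε ^ 2 * |lam| ^ 2 := by rw [hCG, mul_pow, mul_pow, Real.sq_sqrt (by norm_num)]
  · have hρ : τ / G + x ≤ √(1 + x ^ 2) := by
      have : τ / G ≤ 1 - α := by rw [div_le_iff₀ hGpos]; linarith
      linarith
    have hsq : (τ / G + x) ^ 2 ≤ 1 + x ^ 2 :=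
      (Real.le_sqrt (by positivity) (by positivity)).1 hρ
    calc |lam| * τ / 2 + (G ^ 2)⁻¹ * τ ^ 2 = (τ / G + x) ^ 2 - x ^ 2 := by
          rw [hx]; field_simp; ring
      _ ≤ 1 := by linarith

theorem forall_mem_Icc_of_forall_step {P : ℝ → Prop} {Q : ℕ → Prop} {k : ℕ} {τ : ℝ}
    (hP₀ : P 0) (hQ₀ : Q 0)
    (step : ∀ n < k, Q n → Q (n + 1) ∧ ∀ t ∈ Icc ((n : ℝ) * τ) ((n + 1) * τ), P t) :
    ∀ t ∈ Icc (0 : ℝ) (k * τ), P t := by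
  suffices ∀ m ≤ k, Q m ∧ ∀ t ∈ Icc (0 : ℝ) (m * τ), P t from (this k le_rfl).2
  intro m
  induction m with
  | zero =>
    intro _
    refine ⟨hQ₀, fun t ht => ?_⟩
    rwa [show t = 0 by simpa using ht]
  | succ m ih =>
    intro hm
    obtain ⟨hQ, hP⟩ := ih (by omega)
    obtain ⟨hQ', hP'⟩ := step m (by omega) hQ
    refine ⟨hQ', fun t ht => ?_⟩
    rcases le_total t (m * τ) with h | h
    · exact hP t ⟨ht.1, h⟩
    · exact hP' t ⟨h, by simpa using ht.2⟩

theorem robustness_piecewise_euler_general {M : ℕ} {U : Type*}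
    (S : Set (EuclideanSpace ℝ (Fin M)))
    (f : U → EuclideanSpace ℝ (Fin M) → EuclideanSpace ℝ (Fin M))
    (L lam C G α : U → ℝ) (ε τ : ℝ)
    (hLip : ∀ u, ∀ y₁ ∈ S, ∀ y₂ ∈ S, ‖f u y₁ - f u y₂‖ ≤ L u * ‖y₁ - y₂‖)
    (hOSL : ∀ u, ∀ y₁ ∈ S, ∀ y₂ ∈ S,
      ⟪f u y₁ - f u y₂, y₁ - y₂⟫ ≤ lam u * ‖y₁ - y₂‖ ^ 2)
    (hC : ∀ u, IsLUB ((fun y => L u * ‖f u y‖) '' S) (C u))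
    (hG : ∀ u, G u = Real.sqrt 3 * ε * |lam u| / C u)
    (hα : ∀ u, α u = 1 + |lam u| * G u / 4 -
      Real.sqrt (1 + (lam u * G u / 4) ^ 2))
    -- hypothesis (H)
    (hH₁ : ∀ u, lam u < 0)
    (hH₃ : ∀ u, τ ≤ G u * (1 - α u))
    -- the pattern and the exact piecewise solution
    (k : ℕ) (pat : Fin k → U)
    (y : ℝ → EuclideanSpace ℝ (Fin M))
    (hyS : ∀ t ∈ Icc (0 : ℝ) (k * τ), y t ∈ S)
    (hy' : ∀ n : Fin k, ∀ t ∈ Icc ((n : ℝ) * τ) (((n : ℝ) + 1) * τ),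
      HasDerivAt y (f (pat n) (y t)) t)
    -- the piecewise-linear Euler trajectory
    (z : ℕ → EuclideanSpace ℝ (Fin M))
    (hzrec : ∀ n : Fin k, z (n + 1) = z n + τ • f (pat n) (z n))
    (ytil : ℝ → EuclideanSpace ℝ (Fin M))
    (hytil0 : ytil 0 = z 0)
    (hytil : ∀ n : Fin k, ∀ t ∈ Icc ((n : ℝ) * τ) (((n : ℝ) + 1) * τ),
      ytil t = z n + (t - (n : ℝ) * τ) • f (pat n) (z n))
    (hytilS : ∀ t ∈ Icc (0 : ℝ) (k * τ), ytil t ∈ S)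
    -- initial conditions `ε`-close
    (h0 : ‖y 0 - z 0‖ ≤ ε) :
    ∀ t ∈ Icc (0 : ℝ) (k * τ), ‖y t - ytil t‖ ≤ ε := by
  rcases le_or_gt τ 0 with hτ | hτ
  · intro t ht
    have ht0 : t = 0 :=
      le_antisymm (ht.2.trans (mul_nonpos_of_nonneg_of_nonpos k.cast_nonneg hτ)) ht.1
    rwa [ht0, hytil0]
  refine forall_mem_Icc_of_forall_step (Q := fun n => ‖y (n * τ) - z n‖ ≤ ε)
    (by rwa [hytil0]) (by simpa using h0) fun n hn hQ => ?_
  set u := pat ⟨n, hn⟩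
  have hsub : Icc ((n : ℝ) * τ) ((n + 1) * τ) ⊆ Icc 0 (k * τ) :=
    Icc_subset_Icc (by positivity) (by gcongr; exact_mod_cast hn)
  have hOSL' : ∀ y₁ ∈ S, ∀ y₂ ∈ S,
      ⟪f u y₁ - f u y₂, y₁ - y₂⟫ ≤ -|lam u| * ‖y₁ - y₂‖ ^ 2 := by
    rw [abs_of_neg (hH₁ u), neg_neg]; exact hOSL u
  obtain ⟨hCκ, hstep⟩ := euler_step_conditions hτ (hG u) (hα u) (hH₃ u)
  have hclose := norm_sub_le_of_euler_step (hLip u) hOSL' (abs_pos.2 (hH₁ u).ne) (by positivity)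
    (fun w hw => (hC u).1 (mem_image_of_mem _ hw)) hCκ
    (by rwa [add_one_mul, add_sub_cancel_left])
    (fun t ht => hyS t (hsub ht)) (hy' ⟨n, hn⟩) (fun t ht => hytilS t (hsub ht))
    (hytil ⟨n, hn⟩) hQ
  refine ⟨?_, hclose⟩
  have hend : ((n : ℝ) + 1) * τ ∈ Icc ((n : ℝ) * τ) ((n + 1) * τ) :=
    right_mem_Icc.2 (by linarith)
  have hz : ytil ((n + 1) * τ) = z (n + 1) := by
    rw [hytil ⟨n, hn⟩ _ hend, hzrec ⟨n, hn⟩, add_one_mul, add_sub_cancel_left]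
  simpa [hz] using hclose _ hend

/-- Theorem 2 (Robustness): under hypothesis (H), the exact piecewise solution
under a pattern `pat = u₁⋯u_k` and the corresponding piecewise-linear Euler
trajectory stay within distance `ε` on the whole horizon `[0, kτ]`. -/
theorem robustness_piecewise_euler {M : ℕ} {U : Type*} [Fintype U]
    (S : Set (EuclideanSpace ℝ (Fin M)))
    (hSconv : Convex ℝ S) (hScomp : IsCompact S)
    (f : U → EuclideanSpace ℝ (Fin M) → EuclideanSpace ℝ (Fin M))
    (L lam C G α : U → ℝ) (ε τ : ℝ) (hε : 0 < ε)
    (hLip : ∀ u, ∀ y₁ ∈ S, ∀ y₂ ∈ S, ‖f u y₁ - f u y₂‖ ≤ L u * ‖y₁ - y₂‖)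
    (hOSL : ∀ u, ∀ y₁ ∈ S, ∀ y₂ ∈ S,
      ⟪f u y₁ - f u y₂, y₁ - y₂⟫ ≤ lam u * ‖y₁ - y₂‖ ^ 2)
    (hC : ∀ u, IsLUB ((fun y => L u * ‖f u y‖) '' S) (C u))
    (hG : ∀ u, G u = Real.sqrt 3 * ε * |lam u| / C u)
    (hα : ∀ u, α u = 1 + |lam u| * G u / 4 -
      Real.sqrt (1 + (lam u * G u / 4) ^ 2))
    -- hypothesis (H)
    (hH₁ : ∀ u, lam u < 0) (hH₂ : ∀ u, |lam u| * G u / 4 < 1)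
    (hH₃ : ∀ u, τ ≤ G u * (1 - α u))
    -- the pattern and the exact piecewise solution
    (k : ℕ) (pat : Fin k → U)
    (y : ℝ → EuclideanSpace ℝ (Fin M))
    (hyS : ∀ t ∈ Icc (0 : ℝ) (k * τ), y t ∈ S)
    (hy' : ∀ n : Fin k, ∀ t ∈ Icc ((n : ℝ) * τ) (((n : ℝ) + 1) * τ),
      HasDerivAt y (f (pat n) (y t)) t)
    -- the piecewise-linear Euler trajectory
    (z : ℕ → EuclideanSpace ℝ (Fin M))
    (hzrec : ∀ n : Fin k, z (n + 1) = z n + τ • f (pat n) (z n))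
    (ytil : ℝ → EuclideanSpace ℝ (Fin M))
    (hytil0 : ytil 0 = z 0)
    (hytil : ∀ n : Fin k, ∀ t ∈ Icc ((n : ℝ) * τ) (((n : ℝ) + 1) * τ),
      ytil t = z n + (t - (n : ℝ) * τ) • f (pat n) (z n))
    (hytilS : ∀ t ∈ Icc (0 : ℝ) (k * τ), ytil t ∈ S)
    -- initial conditions `ε`-close
    (h0 : ‖y 0 - z 0‖ ≤ ε) :
    ∀ t ∈ Icc (0 : ℝ) (k * τ), ‖y t - ytil t‖ ≤ ε :=
  robustness_piecewise_euler_general S f L lam C G α ε τ hLip hOSL hC hG hα hH₁ hH₃ k pat y hyS hy'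
    z hzrec ytil hytil0 hytil hytilS h0
end

section
/- Let S be a convex subset of ℝ^M and f : ℝ^M → ℝ^M Lipschitz on S with constant L and one-sided Lipschitz on S with constant λ. Set C = sup_{y∈S} L·‖f(y)‖. Fix z₀ ∈ S and t ≥ 0, let ỹ(t) = z₀ + t·f(z₀) and suppose ỹ(t) ∈ S. Then for every y ∈ S: ⟪f(y) − f(z₀), y − ỹ(t)⟫ ≤ λ·‖y − ỹ(t)‖² + C·t·‖y − ỹ(t)‖. -/
open Set Real
open scoped RealInnerProductSpace

/-- Key estimate for the Euler scheme: for `ỹ(t) = z₀ + t·f(z₀)` and any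
`y ∈ S`, `⟪f(y) − f(z₀), y − ỹ(t)⟫ ≤ λ‖y − ỹ(t)‖² + C·t·‖y − ỹ(t)‖`. -/
theorem inner_f_sub_euler_le {M : ℕ}
    (S : Set (EuclideanSpace ℝ (Fin M))) (hSconv : Convex ℝ S)
    (f : EuclideanSpace ℝ (Fin M) → EuclideanSpace ℝ (Fin M))
    (L lam C : ℝ)
    (hLip : ∀ y₁ ∈ S, ∀ y₂ ∈ S, ‖f y₁ - f y₂‖ ≤ L * ‖y₁ - y₂‖)
    (hOSL : ∀ y₁ ∈ S, ∀ y₂ ∈ S,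
      ⟪f y₁ - f y₂, y₁ - y₂⟫ ≤ lam * ‖y₁ - y₂‖ ^ 2)
    (hC : IsLUB ((fun y => L * ‖f y‖) '' S) C)
    (z₀ : EuclideanSpace ℝ (Fin M)) (hz₀S : z₀ ∈ S)
    (t : ℝ) (ht : 0 ≤ t)
    (hEulerS : z₀ + t • f z₀ ∈ S) :
    ∀ y ∈ S,
      ⟪f y - f z₀, y - (z₀ + t • f z₀)⟫ ≤
        lam * ‖y - (z₀ + t • f z₀)‖ ^ 2 + C * t * ‖y - (z₀ + t • f z₀)‖ := by
  intro y hy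
  set w := z₀ + t • f z₀ with hw
  have hsplit : ⟪f y - f z₀, y - w⟫ = ⟪f y - f w, y - w⟫ + ⟪f w - f z₀, y - w⟫ := by
    rw [← inner_add_left]
    congr 1
    abel
  have h1 : ⟪f y - f w, y - w⟫ ≤ lam * ‖y - w‖ ^ 2 := hOSL y hy w hEulerS
  have h2 : ⟪f w - f z₀, y - w⟫ ≤ ‖f w - f z₀‖ * ‖y - w‖ := real_inner_le_norm _ _
  have hwz : ‖w - z₀‖ = t * ‖f z₀‖ := by
    rw [hw, add_sub_cancel_left, norm_smul, Real.norm_of_nonneg ht]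
  have h3 : ‖f w - f z₀‖ ≤ L * (t * ‖f z₀‖) := by
    rw [← hwz]; exact hLip w hEulerS z₀ hz₀S
  have hCz : L * ‖f z₀‖ ≤ C := hC.1 ⟨z₀, hz₀S, rfl⟩
  have h4 : ‖f w - f z₀‖ * ‖y - w‖ ≤ C * t * ‖y - w‖ := by
    apply mul_le_mul_of_nonneg_right _ (norm_nonneg _)
    calc ‖f w - f z₀‖ ≤ L * (t * ‖f z₀‖) := h3
      _ = (L * ‖f z₀‖) * t := by ring
      _ ≤ C * t := mul_le_mul_of_nonneg_right hCz ht
  rw [hsplit]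
  linarith
end
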